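/- Let uv be an edge of a finite simple graph G, and let H be the 3-subdivision of the edge uv. Then γ(H) = γ(G) + 1. -/

import Mathlib

open SimpleGraph

/-- `S` is a dominating set of `G`. -/
def IsDomSet {V : Type*} (G : SimpleGraph V) (S : Finset V) : Prop :=
  ∀ v : V, v ∈ S ∨ ∃ u ∈ S, G.Adj u v

/-- The domination number `γ(G)`. -/
noncomputable def domNum {V : Type*} (G : SimpleGraph V) : ℕ :=
  sInf {n | ∃ S : Finset V, IsDomSet G S ∧ S.card = n}

/-- `C` is a vertex cover of `G`. -/
def IsVC {V : Type*} (G : SimpleGraph V) (C : Finset V) : Prop :=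
  ∀ e ∈ G.edgeSet, ∃ x ∈ C, x ∈ e

/-- The vertex cover number `τ(G)`. -/
noncomputable def tau {V : Type*} (G : SimpleGraph V) : ℕ :=
  sInf {n | ∃ C : Finset V, IsVC G C ∧ C.card = n}

/-- `S` is an independent set of `G`. -/
def IsIndep {V : Type*} (G : SimpleGraph V) (S : Finset V) : Prop :=
  ∀ a ∈ S, ∀ b ∈ S, ¬ G.Adj a b

/-- The independence number `α(G)`. -/
noncomputable def indepNum {V : Type*} (G : SimpleGraph V) : ℕ :=
  sSup {n | ∃ S : Finset V, IsIndep G S ∧ S.card = n}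

/-- The bondage number `b(G)`. -/
noncomputable def bondage {V : Type*} (G : SimpleGraph V) : ℕ :=
  sInf {n | ∃ E' : Finset (Sym2 V), ↑E' ⊆ G.edgeSet ∧ E'.card = n ∧
    domNum (G.deleteEdges ↑E') = domNum G + 1}

/-- The graph `G_v+u` obtained from `G` by adding one new vertex (`none`) adjacent only to `v`. -/
def addLeaf {V : Type*} (G : SimpleGraph V) (v : V) : SimpleGraph (Option V) :=
  SimpleGraph.fromRel (fun x y =>
    (∃ a b, x = some a ∧ y = some b ∧ G.Adj a b) ∨ (x = some v ∧ y = none))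

/-- The graph `G_A+` obtained from `G` by adding, for each `v ∈ A`, one new pendant
vertex adjacent only to `v`. -/
def addLeaves {V : Type*} (G : SimpleGraph V) (A : Finset V) :
    SimpleGraph (V ⊕ {x // x ∈ A}) :=
  SimpleGraph.fromRel (fun x y =>
    (∃ a b, x = Sum.inl a ∧ y = Sum.inl b ∧ G.Adj a b) ∨
    (∃ a : {x // x ∈ A}, x = Sum.inl a.1 ∧ y = Sum.inr a))

/-- The `3`-subdivision of the edge `uv` of `G`: the edge `uv` is deleted, three new
vertices `u' = Sum.inr 0`, `w = Sum.inr 1`, `v' = Sum.inr 2` are added, together with the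
four edges `u u'`, `u' w`, `w v'`, `v' v`. -/
def subdiv3 {V : Type*} (G : SimpleGraph V) (u v : V) : SimpleGraph (V ⊕ Fin 3) :=
  SimpleGraph.fromRel (fun x y =>
    match x, y with
    | Sum.inl a, Sum.inl b => G.Adj a b ∧ s(a, b) ≠ s(u, v)
    | Sum.inl a, Sum.inr i => (a = u ∧ i = 0) ∨ (a = v ∧ i = 2)
    | Sum.inr i, Sum.inr j => (i = 0 ∧ j = 1) ∨ (i = 1 ∧ j = 2)
    | _, _ => False)

/-!
A minimum dominating set `S` of `G` extends to a dominating set of `H` by one subdivision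
vertex: `v′` if `u ∈ S` but `v ∉ S` (so that `v` stays dominated and `w` gets dominated),
`u′` in the symmetric case, and `w` otherwise.

Conversely, a dominating set `T` of `H` contains one of `u′, w, v′`, since `w` must be
dominated, and its part `T_G` in `G` dominates every vertex of `G` except possibly `u` or `v`,
when these are dominated only by `u′` or `v′`. If `T_G` contains `u` or `v`, the edge `uv`
repairs this; if `T` contains neither `u′` nor `v′`, nothing needs repair; otherwise `T` meets
`{u′, w, v′}` twice and `T_G ∪ {u}` dominates `G`. In each case `G` has a dominating set
smaller than `T`.
-/

open Finset Sum

lemma domNum_le_card {V : Type*} {G : SimpleGraph V} {S : Finset V} (hS : IsDomSet G S) :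
    domNum G ≤ #S :=
  Nat.sInf_le ⟨S, hS, rfl⟩

lemma exists_isDomSet_card_eq_domNum {V : Type*} [Fintype V] (G : SimpleGraph V) :
    ∃ S : Finset V, IsDomSet G S ∧ #S = domNum G :=
  Nat.sInf_mem (s := {n | ∃ S : Finset V, IsDomSet G S ∧ #S = n})
    ⟨_, univ, fun x => Or.inl (mem_univ x), rfl⟩

section Subdiv3

variable {V : Type*} {G : SimpleGraph V} {u v : V}

@[simp]
lemma subdiv3_adj_inl_inl {a b : V} :
    (subdiv3 G u v).Adj (inl a) (inl b) ↔ G.Adj a b ∧ s(a, b) ≠ s(u, v) := by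
  simp only [subdiv3, fromRel_adj, ne_eq, inl.injEq]
  constructor
  · rintro ⟨_, h | ⟨hba, hne⟩⟩
    · exact h
    · exact ⟨hba.symm, by rwa [Sym2.eq_swap]⟩
  · rintro ⟨hab, hne⟩
    exact ⟨hab.ne, Or.inl ⟨hab, hne⟩⟩

@[simp]
lemma subdiv3_adj_inr_inl {i : Fin 3} {a : V} :
    (subdiv3 G u v).Adj (inr i) (inl a) ↔ a = u ∧ i = 0 ∨ a = v ∧ i = 2 := by
  simp [subdiv3]

lemma subdiv3_adj_inr_zero {x : V ⊕ Fin 3} :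
    (subdiv3 G u v).Adj x (inr 0) ↔ x = inl u ∨ x = inr 1 := by
  rcases x with a | j
  · simp [subdiv3]
  · fin_cases j <;> simp [subdiv3]

lemma subdiv3_adj_inr_one {x : V ⊕ Fin 3} :
    (subdiv3 G u v).Adj x (inr 1) ↔ x = inr 0 ∨ x = inr 2 := by
  rcases x with a | j
  · simp [subdiv3]
  · fin_cases j <;> simp [subdiv3]

lemma subdiv3_adj_inr_two {x : V ⊕ Fin 3} :
    (subdiv3 G u v).Adj x (inr 2) ↔ x = inl v ∨ x = inr 1 := by
  rcases x with a | j
  · simp [subdiv3]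
  · fin_cases j <;> simp [subdiv3]

lemma isDomSet_subdiv3_disjSum {S : Finset V} (hS : IsDomSet G S) {i : Fin 3}
    (hu : u ∈ S → v ∈ S ∨ i = 2) (hv : v ∈ S → u ∈ S ∨ i = 0)
    (hu' : u ∈ S ∨ i ≠ 2) (hv' : v ∈ S ∨ i ≠ 0) :
    IsDomSet (subdiv3 G u v) (S.disjSum {i}) := by
  rintro (a | j)
  · rcases hS a with ha | ⟨s, hs, hsa⟩
    · exact Or.inl (inl_mem_disjSum.2 ha)
    by_cases he : s(s, a) = s(u, v)
    · rcases Sym2.eq_iff.1 he with ⟨rfl, rfl⟩ | ⟨rfl, rfl⟩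
      · rcases hu hs with ha | rfl
        · exact Or.inl (inl_mem_disjSum.2 ha)
        · exact Or.inr ⟨inr 2, by simp, by simp⟩
      · rcases hv hs with ha | rfl
        · exact Or.inl (inl_mem_disjSum.2 ha)
        · exact Or.inr ⟨inr 0, by simp, by simp⟩
    · exact Or.inr ⟨inl s, inl_mem_disjSum.2 hs, subdiv3_adj_inl_inl.2 ⟨hsa, he⟩⟩
  · obtain rfl | rfl | rfl : j = 0 ∨ j = 1 ∨ j = 2 := by omega
    all_goals
      simp only [Sum.exists, inl_mem_disjSum, inr_mem_disjSum, mem_singleton, inl.injEq,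
        inr.injEq, reduceCtorEq, subdiv3_adj_inr_zero, subdiv3_adj_inr_one, subdiv3_adj_inr_two]
      grind

lemma exists_isDomSet_subdiv3_disjSum {S : Finset V} (hS : IsDomSet G S) :
    ∃ i : Fin 3, IsDomSet (subdiv3 G u v) (S.disjSum {i}) := by
  by_cases hu : u ∈ S <;> by_cases hv : v ∈ S
  · exact ⟨1, isDomSet_subdiv3_disjSum hS (by simp [hv]) (by simp [hu]) (by simp) (by simp)⟩
  · exact ⟨2, isDomSet_subdiv3_disjSum hS (by simp) (by simp [hv]) (by simp [hu]) (by simp)⟩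
  · exact ⟨0, isDomSet_subdiv3_disjSum hS (by simp [hu]) (by simp) (by simp) (by simp [hv])⟩
  · exact ⟨1, isDomSet_subdiv3_disjSum hS (by simp [hu]) (by simp [hv]) (by simp) (by simp)⟩

lemma domNum_subdiv3_le [Fintype V] : domNum (subdiv3 G u v) ≤ domNum G + 1 := by
  obtain ⟨S, hS, hcard⟩ := exists_isDomSet_card_eq_domNum G
  obtain ⟨i, hT⟩ := exists_isDomSet_subdiv3_disjSum (u := u) (v := v) hS
  calc domNum (subdiv3 G u v) ≤ #(S.disjSum {i}) := domNum_le_card hT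
    _ = domNum G + 1 := by rw [card_disjSum, hcard, card_singleton]

section Lower

variable {T : Finset (V ⊕ Fin 3)} (hT : IsDomSet (subdiv3 G u v) T)
include hT

lemma toLeft_dominates_of_subdiv3 (x : V) :
    x ∈ T.toLeft ∨ (∃ s ∈ T.toLeft, G.Adj s x) ∨ x = u ∧ inr 0 ∈ T ∨ x = v ∧ inr 2 ∈ T := by
  rcases hT (inl x) with hx | ⟨s | i, hs, hsx⟩
  · exact Or.inl (mem_toLeft.2 hx)
  · exact Or.inr (Or.inl ⟨s, mem_toLeft.2 hs, (subdiv3_adj_inl_inl.1 hsx).1⟩)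
  · rcases subdiv3_adj_inr_inl.1 hsx with ⟨rfl, rfl⟩ | ⟨rfl, rfl⟩
    · exact Or.inr (Or.inr (Or.inl ⟨rfl, hs⟩))
    · exact Or.inr (Or.inr (Or.inr ⟨rfl, hs⟩))

lemma isDomSet_of_toLeft_subset_of_subdiv3 (huv : G.Adj u v) {S : Finset V}
    (hS : T.toLeft ⊆ S) (h : u ∈ S ∨ v ∈ S) : IsDomSet G S := by
  intro x
  rcases toLeft_dominates_of_subdiv3 hT x with hx | ⟨s, hs, hsx⟩ | ⟨rfl, -⟩ | ⟨rfl, -⟩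
  · exact Or.inl (hS hx)
  · exact Or.inr ⟨s, hS hs, hsx⟩
  · rcases h with hu | hv
    · exact Or.inl hu
    · exact Or.inr ⟨v, hv, huv.symm⟩
  · rcases h with hu | hv
    · exact Or.inr ⟨u, hu, huv⟩
    · exact Or.inl hv

lemma isDomSet_toLeft_of_subdiv3 (h0 : inr 0 ∉ T) (h2 : inr 2 ∉ T) : IsDomSet G T.toLeft := by
  intro x
  rcases toLeft_dominates_of_subdiv3 hT x with hx | hx | ⟨-, h⟩ | ⟨-, h⟩
  · exact Or.inl hx
  · exact Or.inr hx
  · exact absurd h h0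
  · exact absurd h h2

lemma toRight_nonempty_of_subdiv3 : T.toRight.Nonempty := by
  rcases hT (inr 1) with h | ⟨t, ht, hadj⟩
  · exact ⟨1, mem_toRight.2 h⟩
  · rcases subdiv3_adj_inr_one.1 hadj with rfl | rfl
    · exact ⟨0, mem_toRight.2 ht⟩
    · exact ⟨2, mem_toRight.2 ht⟩

lemma one_lt_card_toRight_of_subdiv3 (hu : inl u ∉ T) (hv : inl v ∉ T)
    (h : inr 0 ∈ T ∨ inr 2 ∈ T) : 1 < #T.toRight := by
  have h0 : inr 0 ∈ T ∨ inr 1 ∈ T := by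
    rcases hT (inr 0) with h | ⟨t, ht, hadj⟩
    · exact Or.inl h
    · rcases subdiv3_adj_inr_zero.1 hadj with rfl | rfl
      · exact absurd ht hu
      · exact Or.inr ht
  have h2 : inr 2 ∈ T ∨ inr 1 ∈ T := by
    rcases hT (inr 2) with h | ⟨t, ht, hadj⟩
    · exact Or.inl h
    · rcases subdiv3_adj_inr_two.1 hadj with rfl | rfl
      · exact absurd ht hv
      · exact Or.inr ht
  simp only [one_lt_card, mem_toRight]
  grind

lemma exists_isDomSet_card_lt_of_subdiv3 [DecidableEq V] (huv : G.Adj u v) :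
    ∃ S : Finset V, IsDomSet G S ∧ #S < #T := by
  have hcard := card_toLeft_add_card_toRight (u := T)
  have hright := (toRight_nonempty_of_subdiv3 hT).card_pos
  by_cases huv' : u ∈ T.toLeft ∨ v ∈ T.toLeft
  · exact ⟨T.toLeft, isDomSet_of_toLeft_subset_of_subdiv3 hT huv subset_rfl huv', by omega⟩
  rw [mem_toLeft, mem_toLeft, not_or] at huv'
  by_cases h : inr 0 ∈ T ∨ inr 2 ∈ T
  · have := one_lt_card_toRight_of_subdiv3 hT huv'.1 huv'.2 h
    refine ⟨insert u T.toLeft, isDomSet_of_toLeft_subset_of_subdiv3 hT huv (subset_insert _ _)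
      (Or.inl (mem_insert_self _ _)), ?_⟩
    have := card_insert_le u T.toLeft
    omega
  · rw [not_or] at h
    exact ⟨T.toLeft, isDomSet_toLeft_of_subdiv3 hT h.1 h.2, by omega⟩

end Lower

lemma domNum_add_one_le_subdiv3 [Fintype V] [DecidableEq V] (huv : G.Adj u v) :
    domNum G + 1 ≤ domNum (subdiv3 G u v) := by
  obtain ⟨T, hT, hcard⟩ := exists_isDomSet_card_eq_domNum (subdiv3 G u v)
  obtain ⟨S, hS, hlt⟩ := exists_isDomSet_card_lt_of_subdiv3 hT huv
  have := domNum_le_card hS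
  omega

end Subdiv3

/-- If `H` is the `3`-subdivision of an edge `uv` of `G`, then `γ(H) = γ(G) + 1`. -/
theorem stmt6 {V : Type*} [Fintype V] [DecidableEq V] (G : SimpleGraph V)
    (u v : V) (huv : G.Adj u v) :
    domNum (subdiv3 G u v) = domNum G + 1 :=
  le_antisymm domNum_subdiv3_le (domNum_add_one_le_subdiv3 huv)
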